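/- arXiv:1408.0858 — 2 statements merged into one kernel-verified Lean document; each statement's English description precedes it below -/
import Mathlib

section
/- If Δ is a simplicial complex with n vertices and at most μ facets, then the i-th reduced simplicial homology of Δ with coefficients in a field k vanishes for all i ≥ μ − 1. -/
open Finset

/-- An abstract simplicial complex on vertex type `V` (faces are finsets,
closed under taking subsets; the empty face is allowed). -/
structure SComplex (V : Type) where
  faces : Set (Finset V)
  down_closed : ∀ ⦃s t : Finset V⦄, s ∈ faces → t ⊆ s → t ∈ faces

namespace SComplex

variable {V : Type} [LinearOrder V]

/-- The faces of reduced dimension `i`, i.e. of cardinality `i + 1`. -/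
def czFaces (K : SComplex V) (i : ℤ) : Type :=
  {s : Finset V // s ∈ K.faces ∧ (s.card : ℤ) = i + 1}

/-- Simplicial chains of reduced degree `i` with coefficients in `M`. -/
abbrev chains (K : SComplex V) (M : Type) [AddCommGroup M] (i : ℤ) : Type :=
  K.czFaces i →₀ M

/-- The simplicial boundary map (for reduced homology, so the empty face is used). -/
noncomputable def bdry (K : SComplex V) (M : Type) [AddCommGroup M] (i : ℤ) :
    K.chains M i →ₗ[ℤ] K.chains M (i - 1) :=
  Finsupp.lsum ℤ fun s =>
    ∑ a ∈ s.1.attach,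
      ((-1 : ℤ) ^ ((s.1.sort (· ≤ ·)).idxOf a.1)) •
        (Finsupp.lsingle
          (⟨s.1.erase a.1, K.down_closed s.2.1 (Finset.erase_subset a.1 s.1), by
              have h1 : a.1 ∈ s.1 := a.2
              have h2 := s.2.2
              have h3 : 1 ≤ s.1.card := Finset.card_pos.mpr ⟨a.1, h1⟩
              rw [Finset.card_erase_of_mem h1, Nat.cast_sub h3, h2]
              ring⟩ : K.czFaces (i - 1)) : M →ₗ[ℤ] K.chains M (i - 1))

/-- Transport of chains along an equality of degrees. -/
noncomputable def chainsCongr (K : SComplex V) (M : Type) [AddCommGroup M] {i j : ℤ}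
    (h : i = j) : K.chains M i ≃ₗ[ℤ] K.chains M j := by
  subst h; exact LinearEquiv.refl ℤ _

/-- Reduced simplicial homology of `K` in degree `i` with coefficients in `M`. -/
noncomputable abbrev redHomology (K : SComplex V) (M : Type) [AddCommGroup M] (i : ℤ) : Type :=
  LinearMap.ker (K.bdry M i) ⧸
    Submodule.comap (LinearMap.ker (K.bdry M i)).subtype
      (Submodule.map (K.chainsCongr M (show i + 1 - 1 = i by ring)).toLinearMap
        (LinearMap.range (K.bdry M (i + 1))))

/-- The boundary map for unreduced homology: it is the usual boundary map in positive
degrees and `0` from degree `0` (so that the empty face does not contribute). -/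
noncomputable def ubdry (K : SComplex V) (M : Type) [AddCommGroup M] (i : ℤ) :
    K.chains M i →ₗ[ℤ] K.chains M (i - 1) :=
  if 0 < i then K.bdry M i else 0

/-- Unreduced (ordinary) simplicial homology. -/
noncomputable abbrev homology (K : SComplex V) (M : Type) [AddCommGroup M] (i : ℤ) : Type :=
  LinearMap.ker (K.ubdry M i) ⧸
    Submodule.comap (LinearMap.ker (K.ubdry M i)).subtype
      (Submodule.map (K.chainsCongr M (show i + 1 - 1 = i by ring)).toLinearMap
        (LinearMap.range (K.ubdry M (i + 1))))

end SComplex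

/-- The facets (maximal faces) of a simplicial complex. -/
def SComplex.facets {V : Type} (K : SComplex V) : Set (Finset V) :=
  {s | s ∈ K.faces ∧ ∀ t ∈ K.faces, s ⊆ t → s = t}

/-- The geometric realization of a simplicial complex on a finite vertex set. -/
abbrev SComplex.realization {V : Type} [DecidableEq V] [Fintype V] (K : SComplex V) : Type :=
  {f : V → ℝ // (∀ v, 0 ≤ f v) ∧ (∑ v, f v = 1) ∧
    (Finset.univ.filter (fun v => f v ≠ 0)) ∈ K.faces}

/-- The nerve of a finite family of finsets (e.g. the facets of a complex). -/
def nerveF {V : Type} {t : ℕ} (Fs : Fin t → Finset V) : SComplex (Fin t) where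
  faces := {S | S = ∅ ∨ ∃ w, ∀ i ∈ S, w ∈ Fs i}
  down_closed := by
    rintro s u hs hu
    rcases hs with h | ⟨w, hw⟩
    · left; subst h; exact Finset.subset_empty.mp hu
    · right; exact ⟨w, fun i hi => hw i (hu hi)⟩

/-- The nerve of a finite family of subcomplexes. -/
def nerveC {V : Type} {t : ℕ} (Ks : Fin t → SComplex V) : SComplex (Fin t) where
  faces := {S | S = ∅ ∨ ∃ F : Finset V, F.Nonempty ∧ ∀ i ∈ S, F ∈ (Ks i).faces}
  down_closed := by
    rintro s u hs hu
    rcases hs with h | ⟨F, hF, hw⟩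
    · left; subst h; exact Finset.subset_empty.mp hu
    · right; exact ⟨F, hF, fun i hi => hw i (hu hi)⟩

/-- The intersection of a family of subcomplexes indexed by a finset. -/
def interComplex {V : Type} {t : ℕ} (Ks : Fin t → SComplex V) (S : Finset (Fin t)) :
    SComplex V where
  faces := {F | ∀ i ∈ S, F ∈ (Ks i).faces}
  down_closed := fun _ _ hs hu i hi => (Ks i).down_closed (hs i hi) hu

/-- The full simplex on `Fin n`. -/
def fullSC (n : ℕ) : SComplex (Fin n) where
  faces := Set.univ
  down_closed := fun _ _ _ _ => trivial

/-- The dimension of a simplicial complex (`-1` for the empty complex, junk if empty). -/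
noncomputable def SComplex.dim {V : Type} (K : SComplex V) : ℤ :=
  sSup ((fun s : Finset V => (s.card : ℤ) - 1) '' K.faces)

/-!
All complexes on `V` are subcomplexes of the full simplex, so we work with chains on all finsets
of `V`. Write `⟨G⟩_d` for the chains of `d`-element faces of the complex generated by a family `G`.
If `#G ≤ d`, every cycle `c ∈ ⟨G⟩_d` bounds in `⟨G⟩_(d+1)`, by induction on `#G`. Pick `F ∈ G` and
split `c = a + b` with `a` the part supported inside `F`. Then `∂a = -∂b` lies in the complex
generated by the at most `#G - 1 ≤ d - 1` traces `F ∩ F'`, `F' ≠ F`, so by induction `∂a = ∂c'`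
for some `c' ∈ ⟨traces⟩_d`. Now `a - c'` is a cycle in the simplex `F`, a boundary by coning from
`min F`, and `c' + b` is a cycle of the complex generated by `G \ {F}`, a boundary by induction.
-/

theorem Finset.idxOf_sort_eq_card_filter_lt {V : Type} [LinearOrder V] {s : Finset V} {a : V}
    (ha : a ∈ s) : (s.sort (· ≤ ·)).idxOf a = #{x ∈ s | x < a} := by
  induction s using Finset.induction_on_min with
  | empty => simp at ha
  | insert b s hb ih =>
    have hbs : b ∉ s := fun h => lt_irrefl b (hb b h)
    rw [sort_insert (· ≤ ·) (fun x hx => (hb x hx).le) hbs, filter_insert]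
    rcases eq_or_ne a b with rfl | hab
    · simp [filter_eq_empty_iff.2 fun x hx => not_lt.2 (hb x hx).le]
    · have has : a ∈ s := (mem_insert.1 ha).resolve_left hab
      rw [List.idxOf_cons_ne _ (Ne.symm hab), ih has, if_pos (hb a has),
        card_insert_of_notMem (by simp [hbs])]

theorem Finset.sum_sum_erase_eq_zero_of_antisymm {ι M : Type*} [DecidableEq ι] [AddCommGroup M]
    (s : Finset ι) (f : ι → ι → M) (hf : ∀ a ∈ s, ∀ b ∈ s, a ≠ b → f a b = -f b a) :
    ∑ a ∈ s, ∑ b ∈ s.erase a, f a b = 0 := by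
  rw [← sum_finset_product' s.offDiag s (fun a => s.erase a)
    (by simp [and_comm, and_left_comm, eq_comm]) (f := f)]
  refine sum_involution (fun p _ => p.swap) (fun p hp => ?_) (fun p hp _ h => ?_)
    (fun p hp => by grind) (fun p _ => p.swap_swap)
  · obtain ⟨ha, hb, hab⟩ := mem_offDiag.1 hp
    simp [hf _ ha _ hb hab]
  · exact (mem_offDiag.1 hp).2.2 (congrArg Prod.snd h)

namespace FinsetChains

variable {V : Type} (M : Type) [AddCommGroup M]

def carriedChains (G : Finset (Finset V)) (d : ℕ) : Submodule ℤ (Finset V →₀ M) :=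
  Finsupp.supported M ℤ {s | #s = d ∧ ∃ F ∈ G, s ⊆ F}

variable {M}

theorem carriedChains_mono {G H : Finset (Finset V)} (h : G ⊆ H) (d : ℕ) :
    carriedChains M G d ≤ carriedChains M H d :=
  Finsupp.supported_mono fun _ ⟨hs, F, hF, hsF⟩ => ⟨hs, F, h hF, hsF⟩

theorem carriedChains_image_inter [DecidableEq V] (F : Finset V) (H : Finset (Finset V))
    (d : ℕ) :
    carriedChains M (H.image (F ∩ ·)) d = carriedChains M {F} d ⊓ carriedChains M H d := by
  rw [carriedChains, carriedChains, carriedChains, ← Finsupp.supported_inter]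
  congr 1
  ext s
  simp only [Set.mem_ofPred_eq, Set.mem_inter_iff, exists_mem_image, exists_eq_left,
    mem_singleton, subset_inter_iff]
  constructor
  · rintro ⟨hs, F', hF', hsF, hsF'⟩
    exact ⟨⟨hs, hsF⟩, hs, F', hF', hsF'⟩
  · rintro ⟨⟨hs, hsF⟩, -, F', hF', hsF'⟩
    exact ⟨hs, F', hF', hsF, hsF'⟩

theorem eq_zero_of_mem_carriedChains_empty {d : ℕ} {c : Finset V →₀ M}
    (hc : c ∈ carriedChains M ∅ d) : c = 0 := by
  simpa [carriedChains] using hc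

theorem filter_subset_mem_carriedChains [DecidableEq V] {G : Finset (Finset V)} {d : ℕ}
    {c : Finset V →₀ M} (hc : c ∈ carriedChains M G d) (F : Finset V) :
    c.filter (· ⊆ F) ∈ carriedChains M {F} d := fun s hs => by
  rw [Finset.mem_coe, Finsupp.support_filter, mem_filter] at hs
  exact ⟨(hc hs.1).1, F, mem_singleton_self F, hs.2⟩

theorem filter_not_subset_mem_carriedChains [DecidableEq V] {G : Finset (Finset V)} {d : ℕ}
    {c : Finset V →₀ M} (hc : c ∈ carriedChains M G d) (F : Finset V) :
    c.filter (¬ · ⊆ F) ∈ carriedChains M (G.erase F) d := fun s hs => by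
  rw [Finset.mem_coe, Finsupp.support_filter, mem_filter] at hs
  obtain ⟨hs, F', hF', hsF'⟩ := hc hs.1
  exact ⟨hs, F', mem_erase.2 ⟨by rintro rfl; exact hs.2 hsF', hF'⟩, hsF'⟩

variable [LinearOrder V]

-- The sign `(-1) ^ idxOf` of `bdry`, as a count (see `Finset.idxOf_sort_eq_card_filter_lt`).
def faceSign (s : Finset V) (a : V) : ℤ := (-1) ^ #{x ∈ s | x < a}

theorem faceSign_of_forall_le {s : Finset V} {a : V} (h : ∀ x ∈ s, a ≤ x) : faceSign s a = 1 := by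
  rw [faceSign, filter_eq_empty_iff.2 fun x hx => not_lt.2 (h x hx), card_empty, pow_zero]

theorem faceSign_insert_of_lt {s : Finset V} {v a : V} (hv : v ∉ s) (hva : v < a) :
    faceSign (insert v s) a = -faceSign s a := by
  rw [faceSign, faceSign, filter_insert, if_pos hva, card_insert_of_notMem (by simp [hv]),
    pow_succ, mul_neg_one]

theorem faceSign_erase_of_lt {s : Finset V} {a b : V} (ha : a ∈ s) (hab : a < b) :
    faceSign (s.erase a) b = -faceSign s b := by
  have h := faceSign_insert_of_lt (notMem_erase a s) hab
  rw [insert_erase ha] at h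
  rw [h, neg_neg]

theorem faceSign_erase_of_gt {s : Finset V} {a b : V} (hba : b < a) :
    faceSign (s.erase a) b = faceSign s b := by
  rw [faceSign, faceSign, filter_erase, erase_eq_of_notMem (by simp [hba.not_gt])]

theorem faceSign_mul_faceSign_erase {s : Finset V} {a b : V} (ha : a ∈ s) (hb : b ∈ s)
    (hab : a ≠ b) :
    faceSign s a * faceSign (s.erase a) b = -(faceSign s b * faceSign (s.erase b) a) := by
  rcases hab.lt_or_gt with h | h
  · rw [faceSign_erase_of_lt ha h, faceSign_erase_of_gt h]; ring
  · rw [faceSign_erase_of_lt hb h, faceSign_erase_of_gt h]; ring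

variable (M)

noncomputable def boundary : (Finset V →₀ M) →ₗ[ℤ] (Finset V →₀ M) :=
  Finsupp.lsum ℤ fun s => ∑ a ∈ s, faceSign s a • Finsupp.lsingle (s.erase a)

noncomputable def cone (v : V) : (Finset V →₀ M) →ₗ[ℤ] (Finset V →₀ M) :=
  Finsupp.lsum ℤ fun s => if v ∈ s then 0 else Finsupp.lsingle (insert v s)

variable {M}

theorem boundary_single (s : Finset V) (m : M) :
    boundary M (Finsupp.single s m) = ∑ a ∈ s, faceSign s a • Finsupp.single (s.erase a) m := by
  simp [boundary]

theorem cone_single_of_mem {v : V} {s : Finset V} (h : v ∈ s) (m : M) :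
    cone M v (Finsupp.single s m) = 0 := by
  simp [cone, h]

theorem cone_single_of_notMem {v : V} {s : Finset V} (h : v ∉ s) (m : M) :
    cone M v (Finsupp.single s m) = Finsupp.single (insert v s) m := by
  simp [cone, h]

theorem boundary_boundary (c : Finset V →₀ M) : boundary M (boundary M c) = 0 := by
  suffices (boundary M).comp (boundary M) = (0 : (Finset V →₀ M) →ₗ[ℤ] _) from
    LinearMap.congr_fun this c
  refine Finsupp.lhom_ext fun s m => ?_
  simp only [LinearMap.comp_apply, boundary_single, map_sum, map_zsmul, smul_sum, smul_smul,
    LinearMap.zero_apply]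
  refine sum_sum_erase_eq_zero_of_antisymm s _ fun a ha b hb hab => ?_
  rw [faceSign_mul_faceSign_erase ha hb hab, erase_right_comm, neg_smul]

theorem boundary_cone_add_cone_boundary_single {v : V} {s : Finset V} (hv : ∀ x ∈ s, v ≤ x)
    (m : M) :
    boundary M (cone M v (Finsupp.single s m)) + cone M v (boundary M (Finsupp.single s m)) =
      Finsupp.single s m := by
  by_cases hvs : v ∈ s
  · rw [cone_single_of_mem hvs, map_zero, zero_add, boundary_single, map_sum,
      sum_eq_single_of_mem v hvs fun a ha hav => ?_]
    · rw [map_zsmul, cone_single_of_notMem (notMem_erase v s), insert_erase hvs,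
        faceSign_of_forall_le hv, one_smul]
    · rw [map_zsmul, cone_single_of_mem (mem_erase.2 ⟨Ne.symm hav, hvs⟩), smul_zero]
  · have hlt : ∀ a ∈ s, v < a := fun a ha => (hv a ha).lt_of_ne fun h => hvs (h ▸ ha)
    have hcone : ∀ a ∈ s, cone M v (faceSign s a • Finsupp.single (s.erase a) m)
        = faceSign s a • Finsupp.single (insert v (s.erase a)) m := fun a ha => by
      rw [map_zsmul, cone_single_of_notMem fun h => hvs (mem_of_mem_erase h)]
    have hface : ∀ a ∈ s, faceSign (insert v s) a • Finsupp.single ((insert v s).erase a) m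
        = -(faceSign s a • Finsupp.single (insert v (s.erase a)) m) := fun a ha => by
      rw [erase_insert_of_ne (hlt a ha).ne, faceSign_insert_of_lt hvs (hlt a ha), neg_smul]
    rw [cone_single_of_notMem hvs, boundary_single, sum_insert hvs, erase_insert hvs,
      faceSign_of_forall_le (by simpa using hv), one_smul, boundary_single, map_sum,
      sum_congr rfl hface, sum_congr rfl hcone, sum_neg_distrib]
    abel

theorem boundary_cone_add_cone_boundary {v : V} {c : Finset V →₀ M}
    (hc : ∀ s ∈ c.support, ∀ x ∈ s, v ≤ x) :
    boundary M (cone M v c) + cone M v (boundary M c) = c := by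
  conv_rhs => rw [← c.sum_single]
  conv_lhs => rw [← c.sum_single]
  simp only [Finsupp.sum, map_sum, ← sum_add_distrib]
  exact sum_congr rfl fun s hs => boundary_cone_add_cone_boundary_single (hc s hs) (c s)


theorem boundary_mem_carriedChains {G : Finset (Finset V)} {d : ℕ} {c : Finset V →₀ M}
    (hc : c ∈ carriedChains M G (d + 1)) : boundary M c ∈ carriedChains M G d := by
  rw [← c.sum_single, Finsupp.sum, map_sum]
  refine Submodule.sum_mem _ fun s hs => ?_
  obtain ⟨hcard, F, hF, hsF⟩ := hc hs
  rw [boundary_single]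
  refine Submodule.sum_mem _ fun a ha => Submodule.smul_mem _ _ ?_
  exact Finsupp.single_mem_supported ℤ _
    ⟨by rw [card_erase_of_mem ha, hcard, Nat.add_sub_cancel], F, hF, (erase_subset a s).trans hsF⟩

theorem cone_mem_carriedChains_singleton {F : Finset V} {v : V} (hv : v ∈ F) {d : ℕ}
    {c : Finset V →₀ M} (hc : c ∈ carriedChains M {F} d) :
    cone M v c ∈ carriedChains M {F} (d + 1) := by
  rw [← c.sum_single, Finsupp.sum, map_sum]
  refine Submodule.sum_mem _ fun s hs => ?_
  obtain ⟨hcard, F', hF', hsF⟩ := hc hs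
  rw [mem_singleton.1 hF'] at hsF
  by_cases hvs : v ∈ s
  · rw [cone_single_of_mem hvs]
    exact Submodule.zero_mem _
  · rw [cone_single_of_notMem hvs]
    exact Finsupp.single_mem_supported ℤ _
      ⟨by rw [card_insert_of_notMem hvs, hcard], F, mem_singleton_self F, insert_subset hv hsF⟩

theorem exists_boundary_eq_of_mem_carriedChains_singleton {F : Finset V} {d : ℕ} (hd : 0 < d)
    {z : Finset V →₀ M} (hz : z ∈ carriedChains M {F} d) (hcyc : boundary M z = 0) :
    ∃ w ∈ carriedChains M {F} (d + 1), boundary M w = z := by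
  rcases F.eq_empty_or_nonempty with rfl | hF
  · have hz0 : z = 0 := Finsupp.support_eq_empty.1 <| eq_empty_of_forall_notMem fun s hs => by
      obtain ⟨hcard, F', hF', hsF⟩ := hz hs
      rw [mem_singleton.1 hF', subset_empty] at hsF
      rw [hsF, card_empty] at hcard
      omega
    exact ⟨0, Submodule.zero_mem _, by rw [map_zero, hz0]⟩
  · refine ⟨cone M (F.min' hF) z, cone_mem_carriedChains_singleton (F.min'_mem hF) hz, ?_⟩
    have h := boundary_cone_add_cone_boundary (v := F.min' hF) (c := z) fun s hs x hx => by
      obtain ⟨-, F', hF', hsF⟩ := hz hs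
      exact F.min'_le x (mem_singleton.1 hF' ▸ hsF hx)
    rwa [hcyc, map_zero, add_zero] at h

theorem exists_boundary_eq_of_card_le {G : Finset (Finset V)} {d : ℕ} (hGd : #G ≤ d)
    {c : Finset V →₀ M} (hc : c ∈ carriedChains M G d) (hcyc : boundary M c = 0) :
    ∃ e ∈ carriedChains M G (d + 1), boundary M e = c := by
  induction hG : #G using Nat.strong_induction_on generalizing G d c with
  | _ m ih =>
  subst hG
  rcases G.eq_empty_or_nonempty with rfl | ⟨F, hF⟩
  · exact ⟨0, Submodule.zero_mem _, by rw [map_zero, eq_zero_of_mem_carriedChains_empty hc]⟩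
  obtain ⟨d, rfl⟩ : ∃ d', d = d' + 1 :=
    Nat.exists_eq_add_one.2 (card_pos.2 ⟨F, hF⟩ |>.trans_le hGd)
  have hcardG : #(G.erase F) < #G := card_erase_lt_of_mem hF
  set a := c.filter (· ⊆ F)
  set b := c.filter (¬ · ⊆ F)
  have hab : a + b = c := Finsupp.filter_add_filter_not c _
  have ha : a ∈ carriedChains M {F} (d + 1) := filter_subset_mem_carriedChains hc F
  have hb : b ∈ carriedChains M (G.erase F) (d + 1) := filter_not_subset_mem_carriedChains hc F
  have hba : boundary M b = -boundary M a := by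
    rw [eq_neg_iff_add_eq_zero, add_comm, ← map_add, hab, hcyc]
  have hda : boundary M a ∈ carriedChains M ((G.erase F).image (F ∩ ·)) d := by
    rw [carriedChains_image_inter]
    refine ⟨boundary_mem_carriedChains ha, ?_⟩
    rw [← neg_neg (boundary M a), ← hba]
    exact neg_mem (boundary_mem_carriedChains hb)
  obtain ⟨c', hc', hdc'⟩ := ih _ (card_image_le.trans_lt hcardG) (card_image_le.trans (by omega))
    hda (boundary_boundary a) rfl
  rw [carriedChains_image_inter] at hc'
  obtain ⟨w, hw, hdw⟩ := exists_boundary_eq_of_mem_carriedChains_singleton d.succ_pos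
    (sub_mem ha hc'.1) (by rw [map_sub, hdc', sub_self])
  obtain ⟨e', he', hde'⟩ := ih _ hcardG (by omega) (add_mem hc'.2 hb)
    (by rw [map_add, hdc', hba, add_neg_cancel]) rfl
  refine ⟨w + e', add_mem (carriedChains_mono (singleton_subset_iff.2 hF) _ hw)
    (carriedChains_mono (erase_subset F G) _ he'), ?_⟩
  rw [map_add, hdw, hde', ← hab]
  abel

end FinsetChains

namespace SComplex

open FinsetChains

theorem mem_faces_iff_exists_mem_facets_superset {V : Type} [Finite V] (K : SComplex V)
    {s : Finset V} : s ∈ K.faces ↔ ∃ F ∈ K.facets, s ⊆ F := by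
  refine ⟨fun hs => ?_, fun ⟨_, hF, hsF⟩ => K.down_closed hF.1 hsF⟩
  obtain ⟨F, hsF, hF⟩ := Finite.exists_le_maximal (p := (· ∈ K.faces)) hs
  exact ⟨F, ⟨hF.1, fun t ht hFt => le_antisymm hFt (hF.2 ht hFt)⟩, hsF⟩

variable {V : Type} (K : SComplex V) (M : Type) [AddCommGroup M]

noncomputable abbrev toFinsetChains (i : ℤ) : K.chains M i →ₗ[ℤ] (Finset V →₀ M) :=
  Finsupp.lmapDomain M ℤ Subtype.val

theorem toFinsetChains_single (i : ℤ) (s : K.czFaces i) (m : M) :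
    K.toFinsetChains M i (Finsupp.single s m) = Finsupp.single s.1 m :=
  Finsupp.mapDomain_single

theorem toFinsetChains_injective (i : ℤ) : Function.Injective (K.toFinsetChains M i) :=
  Finsupp.mapDomain_injective Subtype.val_injective

theorem range_toFinsetChains (i : ℤ) :
    LinearMap.range (K.toFinsetChains M i) =
      Finsupp.supported M ℤ {s | s ∈ K.faces ∧ (#s : ℤ) = i + 1} := by
  rw [LinearMap.range_eq_map, ← Finsupp.supported_univ]
  refine (Finsupp.lmapDomain_supported M ℤ _ _).trans ?_
  exact congrArg _ (Set.image_univ.trans Subtype.range_coe_subtype)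

theorem toFinsetChains_chainsCongr {i j : ℤ} (h : i = j) (x : K.chains M i) :
    K.toFinsetChains M j (K.chainsCongr M h x) = K.toFinsetChains M i x := by
  subst h
  rfl

variable [LinearOrder V]

theorem toFinsetChains_bdry (i : ℤ) (x : K.chains M i) :
    K.toFinsetChains M (i - 1) (K.bdry M i x) = boundary M (K.toFinsetChains M i x) := by
  suffices (K.toFinsetChains M (i - 1)).comp (K.bdry M i) =
      (boundary M).comp (K.toFinsetChains M i) from LinearMap.congr_fun this x
  refine Finsupp.lhom_ext fun s m => ?_
  simp only [LinearMap.comp_apply, bdry, Finsupp.lsum_single, LinearMap.sum_apply,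
    LinearMap.smul_apply, map_sum, map_zsmul, toFinsetChains_single, boundary_single]
  rw [← sum_attach s.1 (fun a => faceSign s.1 a • Finsupp.single (s.1.erase a) m)]
  refine sum_congr rfl fun a _ => ?_
  rw [faceSign, ← idxOf_sort_eq_card_filter_lt a.2]
  exact congrArg _ (K.toFinsetChains_single M (i - 1) _ m)

theorem subsingleton_redHomology_of_forall_exists_boundary_eq (i : ℤ)
    (h : ∀ x ∈ LinearMap.ker (K.bdry M i), ∃ e ∈ Finsupp.supported M ℤ
      {s | s ∈ K.faces ∧ (#s : ℤ) = i + 1 + 1}, boundary M e = K.toFinsetChains M i x) :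
    Subsingleton (K.redHomology M i) := by
  rw [Submodule.Quotient.subsingleton_iff, Submodule.comap_subtype_eq_top]
  intro x hx
  obtain ⟨e, he, hex⟩ := h x hx
  rw [← range_toFinsetChains] at he
  obtain ⟨y, rfl⟩ := he
  refine Submodule.mem_map.2 ⟨K.bdry M (i + 1) y, LinearMap.mem_range_self _ _,
    K.toFinsetChains_injective M i ?_⟩
  rw [LinearEquiv.coe_coe, toFinsetChains_chainsCongr, toFinsetChains_bdry, hex]

end SComplex

/-- A simplicial complex with `n` vertices and at most `μ` facets has vanishing
reduced homology with field coefficients in all degrees `i ≥ μ - 1`. -/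
theorem stmt0 {n : ℕ} (K : SComplex (Fin n)) (μ : ℕ)
    (hμ : (SComplex.facets K).ncard ≤ μ) (k : Type) [Field k] :
    ∀ i : ℤ, (μ : ℤ) - 1 ≤ i → Subsingleton (K.redHomology k i) := by
  intro i hi
  obtain ⟨d, hd⟩ : ∃ d : ℕ, (d : ℤ) = i + 1 := ⟨(i + 1).toNat, Int.toNat_of_nonneg (by omega)⟩
  set G := K.facets.toFinite.toFinset
  have hGd : #G ≤ d := by
    rw [← Set.ncard_eq_toFinset_card _]
    omega
  have hfaces : ∀ s, s ∈ K.faces ↔ ∃ F ∈ G, s ⊆ F := fun s => by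
    simp only [G, Set.Finite.mem_toFinset, K.mem_faces_iff_exists_mem_facets_superset]
  refine K.subsingleton_redHomology_of_forall_exists_boundary_eq k i fun x hx => ?_
  have hX : K.toFinsetChains k i x ∈ FinsetChains.carriedChains k G d := by
    refine Finsupp.supported_mono ?_ ((K.range_toFinsetChains k i).le ⟨x, rfl⟩)
    rintro s ⟨hs, hcard⟩
    exact ⟨by omega, (hfaces s).1 hs⟩
  obtain ⟨e, he, hde⟩ := FinsetChains.exists_boundary_eq_of_card_le hGd hX
    (by rw [← K.toFinsetChains_bdry, LinearMap.mem_ker.1 hx, map_zero])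
  refine ⟨e, Finsupp.supported_mono ?_ he, hde⟩
  rintro s ⟨hcard, hsG⟩
  exact ⟨(hfaces s).2 hsG, by omega⟩
end

section
/- A simplicial complex Δ on n vertices with at most n − 3 facets satisfies H̃_{n−3}(Δ; k) = H̃_{n−4}(Δ; k) = 0 for any field k. -/
open Finset

/-!
We show more generally that a `d`-cycle supported on the faces of `μ ≤ d + 1` simplices
`G₁, …, G_μ` of `K` is a boundary. Write the cycle as `a + b` with `a` supported on
`G₁, …, G_{μ-1}` and `b` on `G_μ`. Then `∂b = -∂a` is a `(d-1)`-cycle on the `μ - 1` simplices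
`Gᵢ ∩ G_μ`, hence `∂b = ∂c` by induction, and `a + c`, `b - c` are cycles on `G₁, …, G_{μ-1}`
and on the simplex `G_μ` respectively: the former bounds by induction, the latter because
coning from a vertex of `G_μ` is a contracting homotopy. Every face lies in a facet, so taking
for the `Gᵢ` the facets of `K` gives the theorem.
-/

theorem Finset.sum_sum_erase_eq_zero {α β : Type*} [DecidableEq α] [AddCommMonoid β]
    {s : Finset α} {f : α → α → β} (h : ∀ a ∈ s, ∀ b ∈ s, a ≠ b → f a b + f b a = 0) :
    ∑ a ∈ s, ∑ b ∈ s.erase a, f a b = 0 := by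
  simp only [← filter_ne' s, sum_filter]
  rw [← sum_product' (f := fun a b => if b ≠ a then f a b else 0)]
  refine sum_involution (fun p _ => p.swap) (fun p hp => ?_) (fun p _ hp => ?_)
    (fun p hp => mem_product.mpr (mem_product.mp hp).symm) (fun _ _ => rfl)
  · obtain ⟨ha, hb⟩ := mem_product.mp hp
    by_cases hab : p.2 = p.1
    · simp [hab]
    · simp only [Prod.fst_swap, Prod.snd_swap, if_pos hab, if_pos (Ne.symm hab)]
      exact h _ ha _ hb (Ne.symm hab)
  · intro hswap
    exact hp (if_neg (not_not.mpr (congrArg Prod.fst hswap)))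

namespace SComplex

section Chains

variable {V : Type} (K : SComplex V) (M : Type) [AddCommGroup M]

open Classical in
noncomputable def faceChain (i : ℤ) (t : Finset V) : M →ₗ[ℤ] K.chains M i :=
  if h : t ∈ K.faces ∧ (#t : ℤ) = i + 1 then Finsupp.lsingle ⟨t, h⟩ else 0

def supported (P : Finset V → Prop) (i : ℤ) : Submodule ℤ (K.chains M i) :=
  Finsupp.supported M ℤ {s | P s.1}

variable {K M} {i j : ℤ} {t : Finset V} {P Q : Finset V → Prop}

theorem faceChain_eq_single (h : t ∈ K.faces ∧ (#t : ℤ) = i + 1) (m : M) :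
    K.faceChain M i t m = Finsupp.single (⟨t, h⟩ : K.czFaces i) m := by
  rw [faceChain, dif_pos h]; rfl

theorem faceChain_eq_zero (h : ¬(t ∈ K.faces ∧ (#t : ℤ) = i + 1)) (m : M) :
    K.faceChain M i t m = 0 := by
  rw [faceChain, dif_neg h]; rfl

theorem single_eq_faceChain (s : K.czFaces i) (m : M) :
    Finsupp.single s m = K.faceChain M i s.1 m :=
  (faceChain_eq_single s.2 m).symm

theorem chainsCongr_faceChain (h : i = j) (m : M) :
    K.chainsCongr M h (K.faceChain M i t m) = K.faceChain M j t m := by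
  subst h; rfl

theorem faceChain_mem_supported (hP : P t) (m : M) :
    K.faceChain M i t m ∈ K.supported M P i := by
  by_cases h : t ∈ K.faces ∧ (#t : ℤ) = i + 1
  · rw [faceChain_eq_single h]
    exact Finsupp.single_mem_supported ℤ m hP
  · rw [faceChain_eq_zero h]
    exact zero_mem _

theorem supported_induction {p : K.chains M i → Prop} (zero : p 0)
    (add : ∀ x y, p x → p y → p (x + y))
    (faceChain : ∀ t m, t ∈ K.faces → P t → p (K.faceChain M i t m))
    {z : K.chains M i} (hz : z ∈ K.supported M P i) : p z := by
  rw [← z.sum_single]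
  refine sum_induction _ p add zero fun s hs => ?_
  rw [single_eq_faceChain]
  exact faceChain s.1 (z s) s.2.1 (hz hs)

theorem supported_mono (h : ∀ t, P t → Q t) : K.supported M P i ≤ K.supported M Q i :=
  Finsupp.supported_mono fun _ hs => h _ hs

theorem supported_or :
    K.supported M (fun t => P t ∨ Q t) i = K.supported M P i ⊔ K.supported M Q i :=
  Finsupp.supported_union _ _

theorem supported_and :
    K.supported M (fun t => P t ∧ Q t) i = K.supported M P i ⊓ K.supported M Q i :=
  Finsupp.supported_inter _ _

theorem eq_zero_of_mem_supported (h : ∀ s : K.czFaces i, ¬P s.1) {z : K.chains M i}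
    (hz : z ∈ K.supported M P i) : z = 0 :=
  Finsupp.ext fun s => (Finsupp.mem_supported' _ _).mp hz s (h s)

theorem chainsCongr_mem_supported (h : i = j) {z : K.chains M i}
    (hz : z ∈ K.supported M P i) : K.chainsCongr M h z ∈ K.supported M P j := by
  subst h; exact hz

end Chains

section Signs

variable {V : Type} [LinearOrder V]

theorem idxOf_sort (s : Finset V) {a : V} (ha : a ∈ s) :
    (s.sort (· ≤ ·)).idxOf a = #{x ∈ s | x < a} := by
  set e := s.orderIsoOfFin rfl
  rw [← s.orderIsoOfFin_symm_apply rfl ⟨a, ha⟩, ← Fin.card_Iio]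
  refine card_bij (fun j _ => (e j : V)) (fun j hj => ?_)
    (fun j _ j' _ h => e.injective (Subtype.ext h)) (fun x hx => ?_)
  · have : e j < e (e.symm ⟨a, ha⟩) := e.lt_iff_lt.mpr (mem_Iio.mp hj)
    rw [e.apply_symm_apply] at this
    exact mem_filter.mpr ⟨(e j).2, this⟩
  · obtain ⟨hxs, hxa⟩ := mem_filter.mp hx
    exact ⟨e.symm ⟨x, hxs⟩, mem_Iio.mpr (e.symm.lt_iff_lt.mpr hxa), by simp⟩

/-- The sign of `s.erase a` in the boundary of `s` (see `idxOf_sort`). -/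
def faceSign (s : Finset V) (a : V) : ℤ := (-1) ^ #{x ∈ s | x < a}

theorem faceSign_mul_self (s : Finset V) (a : V) : faceSign s a * faceSign s a = 1 := by
  rw [faceSign, ← pow_add, ← two_mul, pow_mul, neg_one_sq, one_pow]

theorem faceSign_insert_self (s : Finset V) (v : V) :
    faceSign (insert v s) v = faceSign s v := by
  rw [faceSign, faceSign, filter_insert, if_neg (lt_irrefl v)]

theorem faceSign_of_mem {s : Finset V} {a : V} (ha : a ∈ s) (b : V) :
    faceSign s b = (if a < b then -1 else 1) * faceSign (s.erase a) b := by
  unfold faceSign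
  rw [filter_erase]
  split_ifs with hab
  · rw [← card_erase_add_one (mem_filter.mpr ⟨ha, hab⟩), pow_succ, mul_comm]
  · rw [erase_eq_of_notMem (show a ∉ {x ∈ s | x < b} from fun h => hab (mem_filter.mp h).2),
      one_mul]

theorem faceSign_mul_add_swap {s : Finset V} {a b : V} (ha : a ∈ s) (hb : b ∈ s)
    (hab : a ≠ b) :
    faceSign s a * faceSign (s.erase a) b + faceSign s b * faceSign (s.erase b) a = 0 := by
  rw [faceSign_of_mem hb a, faceSign_of_mem ha b]
  rcases hab.lt_or_gt with h | h
  · rw [if_pos h, if_neg h.not_gt]; ring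
  · rw [if_neg h.not_gt, if_pos h]; ring

theorem faceSign_mul_add_cone {t : Finset V} {v a : V} (hv : v ∉ t) (ha : a ∈ t) :
    faceSign t v * faceSign (insert v t) a + faceSign t a * faceSign (t.erase a) v = 0 := by
  rw [faceSign_of_mem (mem_insert_self v t) a, erase_insert hv, faceSign_of_mem ha v]
  rcases (ne_of_mem_of_not_mem ha hv).lt_or_gt with h | h
  · rw [if_pos h, if_neg h.not_gt]; ring
  · rw [if_neg h.not_gt, if_pos h]; ring

end Signs

section Boundary

variable {V : Type} [LinearOrder V] {K : SComplex V} {M : Type} [AddCommGroup M] {i j : ℤ}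
  {t : Finset V} {P Q : Finset V → Prop}

theorem bdry_chainsCongr (h : i = j) (z : K.chains M i) :
    K.bdry M j (K.chainsCongr M h z) =
      K.chainsCongr M (congrArg (· - 1) h) (K.bdry M i z) := by
  subst h; rfl

theorem bdry_faceChain (ht : t ∈ K.faces) (m : M) :
    K.bdry M i (K.faceChain M i t m) =
      ∑ a ∈ t, faceSign t a • K.faceChain M (i - 1) (t.erase a) m := by
  by_cases hc : (#t : ℤ) = i + 1
  · obtain ⟨s, rfl⟩ : ∃ s : K.czFaces i, s.1 = t := ⟨⟨t, ht, hc⟩, rfl⟩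
    rw [← single_eq_faceChain, bdry, Finsupp.lsum_single, LinearMap.sum_apply,
      ← sum_attach s.1]
    refine sum_congr rfl fun a _ => ?_
    rw [LinearMap.smul_apply, idxOf_sort _ a.2, faceChain_eq_single]
    · rfl
  · rw [faceChain_eq_zero (fun h => hc h.2), map_zero]
    refine (sum_eq_zero fun a ha => ?_).symm
    rw [faceChain_eq_zero, smul_zero]
    rintro ⟨-, h⟩
    have := card_erase_add_one ha
    omega

theorem bdry_bdry (z : K.chains M i) : K.bdry M (i - 1) (K.bdry M i z) = 0 := by
  suffices h : (K.bdry M (i - 1)).comp (K.bdry M i) = 0 from LinearMap.congr_fun h z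
  refine Finsupp.lhom_ext fun s m => ?_
  rw [LinearMap.comp_apply, single_eq_faceChain, bdry_faceChain s.2.1, map_sum,
    LinearMap.zero_apply]
  have hface : ∀ a, s.1.erase a ∈ K.faces := fun a => K.down_closed s.2.1 (erase_subset a _)
  simp only [map_smul, bdry_faceChain (hface _), smul_sum, smul_smul]
  refine sum_sum_erase_eq_zero fun a ha b hb hab => ?_
  rw [erase_right_comm, ← add_smul, faceSign_mul_add_swap ha hb hab, zero_smul]

theorem bdry_mem_supported (hP : ∀ ⦃t u⦄, P t → u ⊆ t → P u) {z : K.chains M i}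
    (hz : z ∈ K.supported M P i) : K.bdry M i z ∈ K.supported M P (i - 1) := by
  refine supported_induction (p := fun z => K.bdry M i z ∈ K.supported M P (i - 1)) ?_
    (fun x y hx hy => ?_) (fun t m ht hPt => ?_) hz
  · rw [map_zero]; exact zero_mem _
  · rw [map_add]; exact add_mem hx hy
  · rw [bdry_faceChain ht]
    exact sum_mem fun a _ =>
      Submodule.smul_mem _ _ (faceChain_mem_supported (hP hPt (erase_subset a t)) m)

variable (K M) in
noncomputable def cone (v : V) (i : ℤ) : K.chains M i →ₗ[ℤ] K.chains M (i + 1) :=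
  Finsupp.lsum ℤ fun s =>
    if v ∈ s.1 then 0 else faceSign s.1 v • K.faceChain M (i + 1) (insert v s.1)

theorem cone_faceChain (v : V) (m : M) :
    K.cone M v i (K.faceChain M i t m) =
      if v ∈ t then 0 else faceSign t v • K.faceChain M (i + 1) (insert v t) m := by
  by_cases h : t ∈ K.faces ∧ (#t : ℤ) = i + 1
  · obtain ⟨s, rfl⟩ : ∃ s : K.czFaces i, s.1 = t := ⟨⟨t, h⟩, rfl⟩
    rw [← single_eq_faceChain, cone, Finsupp.lsum_single]
    split_ifs <;> rfl
  · rw [faceChain_eq_zero h, map_zero]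
    split_ifs with hv
    · rfl
    · rw [faceChain_eq_zero, smul_zero]
      rintro ⟨hf, hc⟩
      rw [card_insert_of_notMem hv] at hc
      exact h ⟨K.down_closed hf (subset_insert v t), by push_cast at hc; linarith⟩

theorem cone_mem_supported {G : Finset V} {v : V} (hv : v ∈ G) {z : K.chains M i}
    (hz : z ∈ K.supported M (· ⊆ G) i) : K.cone M v i z ∈ K.supported M (· ⊆ G) (i + 1) := by
  refine supported_induction (p := fun z => K.cone M v i z ∈ K.supported M (· ⊆ G) (i + 1)) ?_
    (fun x y hx hy => ?_) (fun t m _ htG => ?_) hz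
  · rw [map_zero]; exact zero_mem _
  · rw [map_add]; exact add_mem hx hy
  · rw [cone_faceChain]
    split_ifs
    · exact zero_mem _
    · exact Submodule.smul_mem _ _
        (faceChain_mem_supported (P := (· ⊆ G)) (insert_subset hv htG) m)

theorem bdry_cone_add_cone_bdry_faceChain {v : V} {d : ℤ} (ht : insert v t ∈ K.faces)
    (m : M) :
    K.chainsCongr M (add_sub_cancel_right d 1)
        (K.bdry M (d + 1) (K.cone M v d (K.faceChain M d t m))) +
      K.chainsCongr M (sub_add_cancel d 1)
        (K.cone M v (d - 1) (K.bdry M d (K.faceChain M d t m))) =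
      K.faceChain M d t m := by
  have htf : t ∈ K.faces := K.down_closed ht (subset_insert v t)
  rw [bdry_faceChain htf, map_sum, map_sum, cone_faceChain]
  by_cases hv : v ∈ t
  · rw [if_pos hv, map_zero, map_zero, zero_add, sum_eq_single_of_mem v hv]
    · rw [map_smul, cone_faceChain, if_neg (notMem_erase v t)]
      simp only [map_smul, chainsCongr_faceChain, smul_smul, insert_erase hv]
      rw [← faceSign_insert_self (t.erase v), insert_erase hv, faceSign_mul_self, one_smul]
    · intro a _ hav
      rw [map_smul, cone_faceChain, if_pos (mem_erase.mpr ⟨Ne.symm hav, hv⟩), smul_zero,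
        map_zero]
  · rw [if_neg hv, map_smul, bdry_faceChain ht, sum_insert hv, erase_insert hv,
      faceSign_insert_self]
    simp only [map_smul, map_add, map_sum, smul_add, smul_sum, chainsCongr_faceChain,
      cone_faceChain, smul_smul, faceSign_mul_self, one_smul]
    rw [add_assoc, add_eq_left, ← sum_add_distrib]
    refine sum_eq_zero fun a ha => ?_
    rw [if_neg (fun h => hv (mem_of_mem_erase h)), map_smul, chainsCongr_faceChain, smul_smul,
      erase_insert_of_ne (ne_of_mem_of_not_mem ha hv).symm, ← add_smul,
      faceSign_mul_add_cone hv ha, zero_smul]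

theorem bdry_cone_add_cone_bdry {G : Finset V} (hG : G ∈ K.faces) {v : V} (hv : v ∈ G)
    {d : ℤ} {z : K.chains M d} (hz : z ∈ K.supported M (· ⊆ G) d) :
    K.chainsCongr M (add_sub_cancel_right d 1) (K.bdry M (d + 1) (K.cone M v d z)) +
      K.chainsCongr M (sub_add_cancel d 1) (K.cone M v (d - 1) (K.bdry M d z)) = z := by
  refine supported_induction (p := fun z => K.chainsCongr M (add_sub_cancel_right d 1)
      (K.bdry M (d + 1) (K.cone M v d z)) +
      K.chainsCongr M (sub_add_cancel d 1) (K.cone M v (d - 1) (K.bdry M d z)) = z) ?_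
    (fun x y hx hy => ?_) (fun t m _ htG => ?_) hz
  · simp only [map_zero, add_zero]
  · simp only [map_add] at hx hy ⊢
    rw [add_add_add_comm, hx, hy]
  · exact bdry_cone_add_cone_bdry_faceChain (K.down_closed hG (insert_subset hv htG)) m

variable (K M) in
def CyclesAreBoundaries (P : Finset V → Prop) (d : ℤ) : Prop :=
  ∀ z ∈ K.supported M P d, K.bdry M d z = 0 →
    ∃ w ∈ K.supported M P (d + 1),
      K.chainsCongr M (add_sub_cancel_right d 1) (K.bdry M (d + 1) w) = z

theorem cyclesAreBoundaries_of_forall_not {d : ℤ} (h : ∀ s : K.czFaces d, ¬P s.1) :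
    K.CyclesAreBoundaries M P d := fun z hz _ =>
  ⟨0, zero_mem _, by rw [map_zero, map_zero, eq_zero_of_mem_supported h hz]⟩

theorem cyclesAreBoundaries_subset_face {G : Finset V} (hG : G ∈ K.faces) {d : ℤ}
    (hd : 0 ≤ d) : K.CyclesAreBoundaries M (· ⊆ G) d := by
  rcases G.eq_empty_or_nonempty with rfl | ⟨v, hv⟩
  · refine cyclesAreBoundaries_of_forall_not fun s hs => ?_
    have hcard := s.2.2
    rw [subset_empty.mp hs, card_empty] at hcard
    omega
  · intro z hz hcyc
    refine ⟨K.cone M v d z, cone_mem_supported hv hz, ?_⟩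
    simpa only [hcyc, map_zero, add_zero] using bdry_cone_add_cone_bdry hG hv hz

theorem CyclesAreBoundaries.or (hP : ∀ ⦃t u⦄, P t → u ⊆ t → P u)
    (hQ : ∀ ⦃t u⦄, Q t → u ⊆ t → Q u) {d : ℤ} (hPd : K.CyclesAreBoundaries M P d)
    (hQd : K.CyclesAreBoundaries M Q d)
    (hPQ : K.CyclesAreBoundaries M (fun t => P t ∧ Q t) (d - 1)) :
    K.CyclesAreBoundaries M (fun t => P t ∨ Q t) d := by
  intro z hz hcyc
  rw [supported_or] at hz
  obtain ⟨a, ha, b, hb, rfl⟩ := Submodule.mem_sup.mp hz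
  have hba : K.bdry M d b = -K.bdry M d a :=
    eq_neg_of_add_eq_zero_right (by rwa [map_add] at hcyc)
  have hy : K.bdry M d b ∈ K.supported M (fun t => P t ∧ Q t) (d - 1) := by
    rw [supported_and]
    exact ⟨hba ▸ neg_mem (bdry_mem_supported hP ha), bdry_mem_supported hQ hb⟩
  obtain ⟨c', hc', hc'b⟩ := hPQ _ hy (bdry_bdry b)
  set c := K.chainsCongr M (sub_add_cancel d 1) c'
  have hcb : K.bdry M d c = K.bdry M d b := by rw [bdry_chainsCongr]; exact hc'b
  have hcPQ : c ∈ K.supported M (fun t => P t ∧ Q t) d := chainsCongr_mem_supported _ hc'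
  obtain ⟨u, hu, hua⟩ := hPd (a + c) (add_mem ha (supported_mono (fun _ => And.left) hcPQ))
    (by rw [map_add, hcb, ← map_add, hcyc])
  obtain ⟨w, hw, hwb⟩ := hQd (b - c) (sub_mem hb (supported_mono (fun _ => And.right) hcPQ))
    (by rw [map_sub, hcb, sub_self])
  refine ⟨u + w, add_mem (supported_mono (fun _ => Or.inl) hu)
    (supported_mono (fun _ => Or.inr) hw), ?_⟩
  rw [map_add, map_add, hua, hwb, add_add_sub_cancel]

theorem cyclesAreBoundaries_of_card_le {𝒢 : Finset (Finset V)}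
    (h𝒢 : ∀ G ∈ 𝒢, G ∈ K.faces) {d : ℤ} (hd : #𝒢 ≠ 0 → (#𝒢 : ℤ) ≤ d + 1) :
    K.CyclesAreBoundaries M (fun t => ∃ G ∈ 𝒢, t ⊆ G) d := by
  induction hμ : #𝒢 using Nat.strong_induction_on generalizing 𝒢 d with
  | _ μ ih =>
  subst hμ
  rcases 𝒢.eq_empty_or_nonempty with rfl | ⟨G, hG⟩
  · exact cyclesAreBoundaries_of_forall_not fun s => by simp
  have hsplit : (fun t => ∃ H ∈ 𝒢, t ⊆ H) = fun t => t ⊆ G ∨ ∃ H ∈ 𝒢.erase G, t ⊆ H := by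
    ext t
    conv_lhs => rw [← insert_erase hG, exists_mem_insert]
  have hmeet : (fun t => t ⊆ G ∧ ∃ H ∈ 𝒢.erase G, t ⊆ H) =
      fun t => ∃ H ∈ (𝒢.erase G).image (G ∩ ·), t ⊆ H := by
    ext t
    simp only [exists_mem_image, subset_inter_iff]
    exact ⟨fun ⟨htG, H, hH, htH⟩ => ⟨H, hH, htG, htH⟩,
      fun ⟨H, hH, htG, htH⟩ => ⟨htG, H, hH, htH⟩⟩
  have hlt := card_erase_lt_of_mem hG
  rw [hsplit]
  refine CyclesAreBoundaries.or (fun t u ht hu => hu.trans ht)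
    (fun t u ⟨H, hH, htH⟩ hu => ⟨H, hH, hu.trans htH⟩)
    (cyclesAreBoundaries_subset_face (h𝒢 G hG) (by omega))
    (ih _ hlt (fun H hH => h𝒢 H (mem_of_mem_erase hH)) (fun _ => by omega) rfl) ?_
  rw [hmeet]
  refine ih _ (card_image_le.trans_lt hlt) ?_ (fun _ => ?_) rfl
  · simp only [mem_image]
    rintro _ ⟨H, hH, rfl⟩
    exact K.down_closed (h𝒢 G hG) inter_subset_left
  · have := card_image_le (s := 𝒢.erase G) (f := (G ∩ ·))
    omega

theorem CyclesAreBoundaries.subsingleton_redHomology {d : ℤ}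
    (h : K.CyclesAreBoundaries M P d) (hP : ∀ t ∈ K.faces, P t) :
    Subsingleton (K.redHomology M d) := by
  refine Submodule.Quotient.subsingleton_iff.mpr (eq_top_iff.mpr fun x _ => ?_)
  obtain ⟨w, -, hw⟩ := h x.1 (fun s _ => hP s.1 s.2.1) x.2
  exact ⟨_, LinearMap.mem_range_self _ w, hw⟩

end Boundary

theorem exists_mem_facets_subset {V : Type} [Finite V] (K : SComplex V) {s : Finset V}
    (hs : s ∈ K.faces) : ∃ t ∈ K.facets, s ⊆ t := by
  obtain ⟨t, hst, ht⟩ := (Set.toFinite K.faces).exists_le_maximal hs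
  exact ⟨t, ⟨ht.prop, fun u hu htu => le_antisymm htu (ht.2 hu htu)⟩, hst⟩

theorem subsingleton_redHomology_of_ncard_facets_le {V : Type} [LinearOrder V] [Finite V]
    (K : SComplex V) (M : Type) [AddCommGroup M] {d : ℤ}
    (hd : K.facets.ncard ≠ 0 → (K.facets.ncard : ℤ) ≤ d + 1) :
    Subsingleton (K.redHomology M d) := by
  have hfin := Set.toFinite K.facets
  have hcard : #hfin.toFinset = K.facets.ncard := (Set.ncard_eq_toFinset_card _ hfin).symm
  refine CyclesAreBoundaries.subsingleton_redHomology
    (cyclesAreBoundaries_of_card_le (fun G hG => (hfin.mem_toFinset.mp hG).1) (hcard ▸ hd))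
    fun t ht => ?_
  obtain ⟨G, hG, htG⟩ := K.exists_mem_facets_subset ht
  exact ⟨G, hfin.mem_toFinset.mpr hG, htG⟩

end SComplex

/-- A simplicial complex on `n` vertices with at most `n - 3` facets has vanishing reduced
homology with field coefficients in degrees `n - 3` and `n - 4`. -/
theorem stmt12 {n : ℕ} (K : SComplex (Fin n))
    (h : (SComplex.facets K).ncard ≤ n - 3) (k : Type) [Field k] :
    Subsingleton (K.redHomology k ((n : ℤ) - 3)) ∧
      Subsingleton (K.redHomology k ((n : ℤ) - 4)) :=
  ⟨K.subsingleton_redHomology_of_ncard_facets_le k (by omega),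
    K.subsingleton_redHomology_of_ncard_facets_le k (by omega)⟩
end
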